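/- Let r ≥ 4, 0 < k < r−2, and suppose M_k, M_{r−2}, M_r > 0 satisfy M_{r−2} ≤ (‖φ₂‖/‖φ_{r−k}‖^{2/(r−k)}) M_k^{2/(r−k)} M_r^{(r−k−2)/(r−k)} and M₀ ≥ ‖Ψ_r(M_k,M_{r−2},M_r)‖. Then the function x(t) := Ψ_r(M_k,M_{r−2},M_r;t) + M₀ − ‖Ψ_r(M_k,M_{r−2},M_r)‖ satisfies ‖x‖ = M₀, ‖x^{(k)}‖ = M_k, ‖x^{(r−2)}‖ = M_{r−2}, ‖x^{(r)}‖ = M_r. -/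

import Mathlib

open MeasureTheory intervalIntegral Set

/-- essential sup norm on ℝ, as a real number -/
noncomputable def nrm (f : ℝ → ℝ) : ℝ := (eLpNorm f ⊤ volume).toReal

/-- supremum norm on ℝ -/
noncomputable def supNorm (f : ℝ → ℝ) : ℝ := ⨆ t, |f t|

/-- ψ₁ on the base interval [0, a+2] -/
noncomputable def psi1base (a t : ℝ) : ℝ :=
  if t ≤ 1 then t - 1 else if t ≤ a + 1 then 0 else t - a - 1

/-- ψ₁(a;·): even (4+2a)-periodic extension of `psi1base a` -/
noncomputable def psi1 (a : ℝ) : ℝ → ℝ := fun t =>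
  let T := 4 + 2 * a
  let s := t - T * ⌊t / T⌋
  if s ≤ a + 2 then psi1base a s else psi1base a (T - s)

/-- ψ₂ on the base interval [0, a+2] -/
noncomputable def psi2base (a t : ℝ) : ℝ :=
  if t ≤ 1 then (t - 1) ^ 2 / 2 - 1 / 2
  else if t ≤ a + 1 then -(1 / 2)
  else (t - a - 1) ^ 2 / 2 - 1 / 2

/-- ψ₂(a;·): odd (4+2a)-periodic extension of `psi2base a` -/
noncomputable def psi2 (a : ℝ) : ℝ → ℝ := fun t =>
  let T := 4 + 2 * a
  let s := t - T * ⌊t / T⌋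
  if s ≤ a + 2 then psi2base a s else -psi2base a (T - s)

/-- `IsPsi a r f` : f is the (r-1)-th (4+2a)-periodic integral with zero mean
of ψ₁(a;·), i.e. f = ψ_r(a;·). -/
def IsPsi (a : ℝ) : ℕ → (ℝ → ℝ) → Prop
  | 0, _ => False
  | 1, f => f = psi1 a
  | (n + 2), f => ∃ g, IsPsi a (n + 1) g ∧
      (∀ s t : ℝ, f t - f s = ∫ u in s..t, g u) ∧
      (∫ t in (0:ℝ)..(4 + 2 * a), f t) = 0

/-- φ₀(t) = sgn (sin t) -/
noncomputable def phi0 (t : ℝ) : ℝ := Real.sign (Real.sin t)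

/-- `IsPhi r f` : f is the Euler perfect spline φ_r, the r-th 2π-periodic
integral with zero mean of φ₀. -/
noncomputable def IsPhi : ℕ → (ℝ → ℝ) → Prop
  | 0, f => f = phi0
  | (n + 1), f => ∃ g, IsPhi n g ∧
      (∀ s t : ℝ, f t - f s = ∫ u in s..t, g u) ∧
      (∫ t in (0:ℝ)..(2 * Real.pi), f t) = 0

/-- membership in L^r_{∞,∞}(ℝ): x^{(r-1)} locally absolutely continuous,
x and x^{(r)} essentially bounded. -/
def MemL (r : ℕ) (x : ℝ → ℝ) : Prop :=
  ContDiff ℝ (r - 1 : ℕ) x ∧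
  (∀ s t : ℝ, iteratedDeriv (r - 1) x t - iteratedDeriv (r - 1) x s =
      ∫ u in s..t, iteratedDeriv r x u) ∧
  MemLp x ⊤ volume ∧ MemLp (iteratedDeriv r x) ⊤ volume

/-- the spline Ψ_{a,b,λ}(t) = b · f(λ t), where f = ψ_r(a;·) -/
noncomputable def Psi (b lam : ℝ) (f : ℝ → ℝ) : ℝ → ℝ := fun t => b * f (lam * t)

/-!
ψ₁(a;·) is `(a+2)`-antiperiodic, being the even `(4+2a)`-periodic extension of a function that is
odd about `(a+2)/2`; a primitive of an antiperiodic function with zero mean over the period is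
again antiperiodic, so every ψ_r(a;·), and hence Ψ, is antiperiodic. A continuous antiperiodic
function attains the maximum of its modulus at a point where it is positive, and there `Ψ + C`
attains `‖Ψ‖ + C` for `C ≥ 0`. Derivatives of positive order do not see the constant.
-/

open Function

section EssSup

lemma enorm_le_eLpNormEssSup_of_continuous {X E : Type*} [TopologicalSpace X] [MeasurableSpace X]
    {μ : Measure X} [μ.IsOpenPosMeasure] [NormedAddCommGroup E] {h : X → E}
    (hc : Continuous h) (x : X) : ‖h x‖ₑ ≤ eLpNormEssSup h μ := by
  have hclosed : IsClosed {x | ‖h x‖ₑ ≤ eLpNormEssSup h μ} :=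
    isClosed_le hc.enorm continuous_const
  have hdense := μ.dense_of_ae (enorm_ae_le_eLpNormEssSup h μ)
  rw [dense_iff_closure_eq, hclosed.closure_eq] at hdense
  exact (hdense ▸ mem_univ x :)

lemma nrm_le_of_forall_abs_le {h : ℝ → ℝ} {B : ℝ} (hB : 0 ≤ B) (hbound : ∀ t, |h t| ≤ B) :
    nrm h ≤ B := by
  have hess : eLpNormEssSup h volume ≤ ENNReal.ofReal B :=
    eLpNormEssSup_le_of_ae_bound (ae_of_all _ fun t => by simpa using hbound t)
  simpa [nrm, eLpNorm_exponent_top, hB] using ENNReal.toReal_mono ENNReal.ofReal_ne_top hess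

lemma nrm_eq_abs_of_forall_abs_le {h : ℝ → ℝ} (hc : Continuous h) {t₀ : ℝ}
    (hmax : ∀ t, |h t| ≤ |h t₀|) : nrm h = |h t₀| := by
  refine le_antisymm (nrm_le_of_forall_abs_le (abs_nonneg _) hmax) ?_
  have hess : eLpNormEssSup h volume ≤ ENNReal.ofReal |h t₀| :=
    eLpNormEssSup_le_of_ae_bound (ae_of_all _ fun t => by simpa using hmax t)
  have := ENNReal.toReal_mono (ne_top_of_le_ne_top ENNReal.ofReal_ne_top hess)
    (enorm_le_eLpNormEssSup_of_continuous (μ := volume) hc t₀)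
  simpa [nrm, eLpNorm_exponent_top] using this

end EssSup

namespace Function.Antiperiodic

variable {h : ℝ → ℝ} {c : ℝ}

lemma exists_forall_abs_le (hanti : Antiperiodic h c) (hc : c ≠ 0) (hcont : Continuous h) :
    ∃ t₀, ∀ t, |h t| ≤ h t₀ := by
  obtain ⟨_, ⟨t₁, rfl⟩, hgreatest⟩ := ((hanti.periodic.comp abs).compact_of_continuous
    (smul_ne_zero two_ne_zero hc) hcont.abs).exists_isGreatest (range_nonempty _)
  have hmax : ∀ t, |h t| ≤ |h t₁| := fun t => hgreatest ⟨t, rfl⟩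
  rcases le_total 0 (h t₁) with hpos | hneg
  · exact ⟨t₁, fun t => (hmax t).trans_eq (abs_of_nonneg hpos)⟩
  · exact ⟨t₁ + c, fun t => (hmax t).trans_eq (by rw [hanti t₁, abs_of_nonpos hneg])⟩

lemma nrm_const_add (hanti : Antiperiodic h c) (hc : c ≠ 0) (hcont : Continuous h)
    {C : ℝ} (hC : 0 ≤ C) : nrm (fun t => C + h t) = C + nrm h := by
  obtain ⟨t₀, hmax⟩ := hanti.exists_forall_abs_le hc hcont
  have hpos : 0 ≤ h t₀ := (abs_nonneg _).trans (hmax t₀)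
  have hnrm : nrm h = h t₀ := by
    rw [nrm_eq_abs_of_forall_abs_le hcont (t₀ := t₀) (fun t => (hmax t).trans (le_abs_self _)),
      abs_of_nonneg hpos]
  have hmax' : ∀ t, |C + h t| ≤ |C + h t₀| := fun t => by
    rw [abs_of_nonneg (add_nonneg hC hpos)]
    exact (abs_add_le _ _).trans (by rw [abs_of_nonneg hC]; linarith [hmax t])
  rw [nrm_eq_abs_of_forall_abs_le (by fun_prop) hmax', hnrm, abs_of_nonneg (add_nonneg hC hpos)]

end Function.Antiperiodic

noncomputable def evenPeriodicExt (T L : ℝ) (p : ℝ → ℝ) (t : ℝ) : ℝ :=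
  if t - T * ⌊t / T⌋ ≤ L then p (t - T * ⌊t / T⌋) else p (T - (t - T * ⌊t / T⌋))

namespace evenPeriodicExt

variable {T L : ℝ} {p : ℝ → ℝ}

lemma periodic (hT : T ≠ 0) : Periodic (evenPeriodicExt T L p) T := by
  intro t
  have hfloor : ⌊(t + T) / T⌋ = ⌊t / T⌋ + 1 := by
    rw [add_div, div_self hT, Int.floor_add_one]
  have hshift : t + T - T * ↑(⌊t / T⌋ + 1) = t - T * ⌊t / T⌋ := by push_cast; ring
  simp only [evenPeriodicExt, hfloor, hshift]

lemma eq_of_mem_Ico {s : ℝ} (hs : s ∈ Ico 0 T) :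
    evenPeriodicExt T L p s = if s ≤ L then p s else p (T - s) := by
  have hT : 0 < T := hs.1.trans_lt hs.2
  have hfloor : ⌊s / T⌋ = 0 := by
    rw [Int.floor_eq_zero_iff]
    exact ⟨div_nonneg hs.1 hT.le, (div_lt_one hT).2 hs.2⟩
  simp only [evenPeriodicExt, hfloor, Int.cast_zero, mul_zero, sub_zero]

lemma antiperiodic (hL : 0 < L) (hp : ∀ s, p (L - s) = -p s) :
    Antiperiodic (evenPeriodicExt (2 * L) L p) L := by
  intro t
  have hT : 0 < 2 * L := by positivity
  have hper := periodic (L := L) (p := p) hT.ne'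
  set n := ⌊t / (2 * L)⌋
  set s := t - n * (2 * L)
  have hs : s ∈ Ico 0 (2 * L) :=
    ⟨Int.sub_floor_div_mul_nonneg t hT, Int.sub_floor_div_mul_lt t hT⟩
  have ht : t = s + n * (2 * L) := by ring
  rw [ht, add_right_comm, hper.int_mul n, hper.int_mul n]
  rcases lt_or_ge s L with hsL | hLs
  · rw [eq_of_mem_Ico ⟨by linarith [hs.1], by linarith⟩, eq_of_mem_Ico hs, if_pos hsL.le]
    split_ifs with h
    · rw [le_antisymm (by linarith) hs.1, zero_add, ← hp, sub_zero]
    · rw [← hp]; ring_nf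
  · rw [show s + L = s - L + 2 * L by ring, hper, eq_of_mem_Ico ⟨by linarith, by linarith [hs.2]⟩,
      eq_of_mem_Ico hs, if_pos (by linarith [hs.2])]
    split_ifs with h
    · rw [le_antisymm h hLs, sub_self, ← neg_eq_iff_eq_neg, ← hp, sub_zero]
    · rw [← hp]; ring_nf

lemma measurable (hp : Measurable p) : Measurable (evenPeriodicExt T L p) := by
  have hs : Measurable fun t => t - T * ⌊t / T⌋ := by fun_prop
  exact .ite (measurableSet_le hs measurable_const) (hp.comp hs) (hp.comp (measurable_const.sub hs))

lemma abs_le (hL : 0 < L) {B : ℝ} (hB : ∀ s ∈ Icc 0 L, |p s| ≤ B) (t : ℝ) :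
    |evenPeriodicExt (2 * L) L p t| ≤ B := by
  have hper := periodic (T := 2 * L) (L := L) (p := p) (by positivity)
  obtain ⟨s, hs, hts⟩ := hper.exists_mem_Ico₀ (by positivity) t
  rw [hts, eq_of_mem_Ico hs]
  split_ifs with h
  · exact hB s ⟨hs.1, h⟩
  · exact hB _ ⟨by linarith [hs.2], by linarith⟩

end evenPeriodicExt

lemma psi1_eq_evenPeriodicExt (a : ℝ) :
    psi1 a = evenPeriodicExt (2 * (a + 2)) (a + 2) (psi1base a) := by
  rw [show 2 * (a + 2) = 4 + 2 * a by ring]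
  rfl

lemma psi1base_sub_eq_neg {a : ℝ} (ha : 0 ≤ a) (s : ℝ) :
    psi1base a (a + 2 - s) = -psi1base a s := by
  unfold psi1base
  split_ifs <;> linarith

lemma abs_psi1base_le_one {a s : ℝ} (hs : s ∈ Icc 0 (a + 2)) : |psi1base a s| ≤ 1 := by
  obtain ⟨h0, h1⟩ := hs
  unfold psi1base
  split_ifs <;> rw [_root_.abs_le] <;> constructor <;> linarith

lemma psi1_antiperiodic {a : ℝ} (ha : 0 ≤ a) : Antiperiodic (psi1 a) (a + 2) := by
  rw [psi1_eq_evenPeriodicExt]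
  exact evenPeriodicExt.antiperiodic (by linarith) (psi1base_sub_eq_neg ha)

lemma psi1_locallyIntegrable {a : ℝ} (ha : 0 ≤ a) : LocallyIntegrable (psi1 a) volume := by
  rw [psi1_eq_evenPeriodicExt]
  have hmeas : Measurable (psi1base a) :=
    .ite measurableSet_Iic (by fun_prop) (.ite measurableSet_Iic measurable_const (by fun_prop))
  refine (memLp_top_of_bound (evenPeriodicExt.measurable hmeas).aestronglyMeasurable 1
    (ae_of_all _ fun t => ?_)).locallyIntegrable le_top
  exact evenPeriodicExt.abs_le (by linarith) (fun s hs => abs_psi1base_le_one hs) t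

section Primitive

variable {f g : ℝ → ℝ}

lemma continuous_of_forall_sub_eq_integral (hg : LocallyIntegrable g volume)
    (hfg : ∀ s t, f t - f s = ∫ u in s..t, g u) : Continuous f := by
  have hf : f = fun t => f 0 + ∫ u in (0 : ℝ)..t, g u := funext fun t => by linarith [hfg 0 t]
  rw [hf]
  exact continuous_const.add (intervalIntegral.continuous_primitive
    (fun u v => (hg.integrableOn_isCompact isCompact_uIcc).intervalIntegrable) 0)

/-- A primitive of a `c`-antiperiodic function is `c`-antiperiodic up to a constant; the zero
mean over the period `2c` forces that constant to vanish. -/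
lemma Function.Antiperiodic.of_forall_sub_eq_integral {c : ℝ} (hc : c ≠ 0)
    (hg : Antiperiodic g c) (hg_int : LocallyIntegrable g volume)
    (hfg : ∀ s t, f t - f s = ∫ u in s..t, g u) (hmean : ∫ t in (0 : ℝ)..2 * c, f t = 0) :
    Antiperiodic f c := by
  have hf := continuous_of_forall_sub_eq_integral hg_int hfg
  have hsum : ∀ t, f (t + c) + f t = f c + f 0 := by
    intro t
    have hshift : ∫ u in c..t + c, g u = -∫ u in (0 : ℝ)..t, g u :=
      calc ∫ u in c..t + c, g u = ∫ u in (0 : ℝ)..t, g (u + c) := by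
            rw [intervalIntegral.integral_comp_add_right, zero_add]
        _ = ∫ u in (0 : ℝ)..t, -g u := by congr 1 with u; exact hg u
        _ = -∫ u in (0 : ℝ)..t, g u := intervalIntegral.integral_neg
    linarith [hfg c (t + c), hfg 0 t]
  have hK : c * (f c + f 0) = 0 :=
    calc c * (f c + f 0) = ∫ t in (0 : ℝ)..c, (f (t + c) + f t) := by
          simp only [hsum, intervalIntegral.integral_const, sub_zero, smul_eq_mul]
      _ = (∫ t in (0 : ℝ)..c, f (t + c)) + ∫ t in (0 : ℝ)..c, f t :=
        intervalIntegral.integral_add ((hf.comp (continuous_add_const c)).intervalIntegrable _ _)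
          (hf.intervalIntegrable _ _)
      _ = ∫ t in (0 : ℝ)..2 * c, f t := by
        rw [intervalIntegral.integral_comp_add_right f c, zero_add, add_comm,
          intervalIntegral.integral_add_adjacent_intervals (hf.intervalIntegrable _ _)
            (hf.intervalIntegrable _ _), two_mul]
      _ = 0 := hmean
  intro t
  linarith [hsum t, (mul_eq_zero.1 hK).resolve_left hc]

end Primitive

namespace IsPsi

variable {a : ℝ} {f : ℝ → ℝ}

lemma antiperiodic_and_locallyIntegrable (ha : 0 ≤ a) :
    ∀ {n : ℕ} {f : ℝ → ℝ}, IsPsi a n f → Antiperiodic f (a + 2) ∧ LocallyIntegrable f volume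
  | 0, _, hf => hf.elim
  | 1, _, rfl => ⟨psi1_antiperiodic ha, psi1_locallyIntegrable ha⟩
  | _ + 2, f, ⟨g, hg, hfg, hmean⟩ => by
    obtain ⟨hg_anti, hg_int⟩ := antiperiodic_and_locallyIntegrable ha hg
    refine ⟨hg_anti.of_forall_sub_eq_integral (by linarith) hg_int hfg ?_,
      (continuous_of_forall_sub_eq_integral hg_int hfg).locallyIntegrable⟩
    rwa [show 2 * (a + 2) = 4 + 2 * a by ring]

lemma antiperiodic (ha : 0 ≤ a) {n : ℕ} (hf : IsPsi a n f) : Antiperiodic f (a + 2) :=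
  (antiperiodic_and_locallyIntegrable ha hf).1

lemma continuous (ha : 0 ≤ a) {n : ℕ} (hn : 2 ≤ n) (hf : IsPsi a n f) : Continuous f := by
  obtain ⟨m, rfl⟩ := Nat.exists_eq_add_of_le' hn
  obtain ⟨g, hg, hfg, -⟩ := hf
  exact continuous_of_forall_sub_eq_integral (antiperiodic_and_locallyIntegrable ha hg).2 hfg

end IsPsi

theorem stmt18_general (r k : ℕ) (hr : 4 ≤ r) (hk : 0 < k)
    (M0 Mk Mr2 Mr : ℝ)
    (a b lam : ℝ) (ha : 0 ≤ a) (hlam : 0 < lam)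
    (f : ℝ → ℝ) (hf : IsPsi a r f)
    (hNk : nrm (iteratedDeriv k (Psi b lam f)) = Mk)
    (hNr2 : nrm (iteratedDeriv (r - 2) (Psi b lam f)) = Mr2)
    (hNr : nrm (iteratedDeriv r (Psi b lam f)) = Mr)
    (hM0 : nrm (Psi b lam f) ≤ M0) :
    nrm (fun t => Psi b lam f t + M0 - nrm (Psi b lam f)) = M0 ∧
    nrm (iteratedDeriv k (fun t => Psi b lam f t + M0 - nrm (Psi b lam f))) = Mk ∧
    nrm (iteratedDeriv (r - 2) (fun t => Psi b lam f t + M0 - nrm (Psi b lam f))) = Mr2 ∧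
    nrm (iteratedDeriv r (fun t => Psi b lam f t + M0 - nrm (Psi b lam f))) = Mr := by
  set C := M0 - nrm (Psi b lam f)
  have hshift : (fun t => Psi b lam f t + M0 - nrm (Psi b lam f)) = fun t => C + Psi b lam f t :=
    funext fun t => by ring
  have hanti : Antiperiodic (Psi b lam f) (lam⁻¹ * (a + 2)) := fun t => by
    simp only [Psi, (hf.antiperiodic ha).const_mul hlam.ne' t, mul_neg]
  have hcont : Continuous (Psi b lam f) := by
    have := hf.continuous ha (by omega)
    unfold Psi; fun_prop
  have hderiv : ∀ n, 0 < n → iteratedDeriv n (fun t => C + Psi b lam f t) =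
      iteratedDeriv n (Psi b lam f) := fun n hn => funext fun _ => iteratedDeriv_const_add hn C
  rw [hshift, hderiv k hk, hderiv (r - 2) (by omega), hderiv r (by omega),
    hanti.nrm_const_add (by positivity) hcont (sub_nonneg.2 hM0)]
  exact ⟨by ring, hNk, hNr2, hNr⟩

theorem stmt18 (r k : ℕ) (hr : 4 ≤ r) (hk : 0 < k) (hkr : k < r - 2)
    (M0 Mk Mr2 Mr : ℝ) (hMk : 0 < Mk) (hMr2 : 0 < Mr2) (hMr : 0 < Mr)
    (phi2 phirk : ℝ → ℝ) (hphi2 : IsPhi 2 phi2) (hphirk : IsPhi (r - k) phirk)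
    (hKol : Mr2 ≤ nrm phi2 / nrm phirk ^ ((2 : ℝ) / ((r : ℝ) - k)) *
      (Mk ^ ((2 : ℝ) / ((r : ℝ) - k)) * Mr ^ (((r : ℝ) - k - 2) / ((r : ℝ) - k))))
    (a b lam : ℝ) (ha : 0 ≤ a) (hb : 0 < b) (hlam : 0 < lam)
    (f : ℝ → ℝ) (hf : IsPsi a r f)
    (hNk : nrm (iteratedDeriv k (Psi b lam f)) = Mk)
    (hNr2 : nrm (iteratedDeriv (r - 2) (Psi b lam f)) = Mr2)
    (hNr : nrm (iteratedDeriv r (Psi b lam f)) = Mr)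
    (hM0 : nrm (Psi b lam f) ≤ M0) :
    nrm (fun t => Psi b lam f t + M0 - nrm (Psi b lam f)) = M0 ∧
    nrm (iteratedDeriv k (fun t => Psi b lam f t + M0 - nrm (Psi b lam f))) = Mk ∧
    nrm (iteratedDeriv (r - 2) (fun t => Psi b lam f t + M0 - nrm (Psi b lam f))) = Mr2 ∧
    nrm (iteratedDeriv r (fun t => Psi b lam f t + M0 - nrm (Psi b lam f))) = Mr :=
  stmt18_general r k hr hk M0 Mk Mr2 Mr a b lam ha hlam f hf hNk hNr2 hNr hM0
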